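/- Let α be an irrational real number with 0 < α < 1, let k ≥ 1, and let m be an integer with a_{k+1}·q_k < m < q_{k+1}. Suppose m ≠ (a_{k+1} − 1)·q_k + q_{k−1}, and suppose moreover that if a_k = 1 then m ≠ (a_{k+1} − 1)·q_k + 2·q_{k−1}. Then ‖mα‖ ≥ ‖q_{k−1}α‖ + (a_{k+1} + 1)·‖q_kα‖. -/

import Mathlib

/-!
For `k ≤ 1` no integer lies strictly between `a_{k+1} q_k` and `q_{k+1}`, so let `k ≥ 2` and write
`m = a_{k+1} q_k + r` with `0 < r < q_{k-1}`. Put `η_j = |q_j α - p_j| ≥ ‖q_j α‖`; it suffices to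
bound `|mα - N|` from below for every integer `N`. Since `(q_{k-1}, p_{k-1})` and
`(q_{k-2}, p_{k-2})` form a basis of `ℤ²`, there are integers `u, v` with
`m = a_{k+1} q_k + u q_{k-1} + v q_{k-2}` and `|mα - N| = |a_{k+1} η_k - u η_{k-1} + v η_{k-2}|`.
The bound `0 < r < q_{k-1}` forces `u` and `v` to have opposite signs, and then
`η_{k-2} = a_k η_{k-1} + η_k` and `a_{k+1} η_k ≤ η_{k-1}` give the estimate, except when
`u = 1, v = -1, a_k = 1`, which is the excluded value `m = (a_{k+1} - 1) q_k + 2 q_{k-1}`.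
-/

/-!
Put `k = n + 2` and write `m = a_{k+1} q_k + r` with `0 < r < q_{k-1}`. Since
`(q_{k-1}, p_{k-1})` and `(q_{k-2}, p_{k-2})` form a basis of `ℤ²`, every `N ∈ ℤ` gives integers
`u, v` with `m = a_{k+1} q_k + u q_{k-1} + v q_{k-2}` and, with `η_j = |q_j α - p_j|`,
`|mα - N| = |a_{k+1} η_k - u η_{k-1} + v η_{k-2}|`.
The bound `0 < r < q_{k-1}` forces `u` and `v` to have opposite signs, and then
`η_{k-2} = a_k η_{k-1} + η_k` and `a_{k+1} η_k ≤ η_{k-1}` give the estimate, except when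
`u = 1, v = -1, a_k = 1`, which is the excluded value `m = (a_{k+1} - 1) q_k + 2 q_{k-1}`.
-/

open scoped Classical

noncomputable section

namespace SturmianAbelian

/-- Complete quotients: `cq α t = α_t` for `t ≥ 1`; `cq α 0 = α` is a dummy value chosen so that
`cq α 1 = 1/(α - ⌊α⌋) = 1/α` when `0 < α < 1`. -/
noncomputable def cq (α : ℝ) : ℕ → ℝ
  | 0 => α
  | t + 1 => (cq α t - ⌊cq α t⌋)⁻¹

/-- Partial quotients: `pq α t = a_t = ⌊α_t⌋` for `t ≥ 1`. -/
noncomputable def pq (α : ℝ) (t : ℕ) : ℕ := (⌊cq α t⌋).toNat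

/-- Denominators of the convergents of `α`: `qd α k = q_k`, with
`q_0 = 1`, `q_1 = a_1`, `q_k = a_k q_{k-1} + q_{k-2}`. -/
noncomputable def qd (α : ℝ) : ℕ → ℕ
  | 0 => 1
  | 1 => pq α 1
  | (k + 2) => pq α (k + 2) * qd α (k + 1) + qd α k

/-- Distance from `x` to the nearest integer, `‖x‖`. -/
noncomputable def nint (x : ℝ) : ℝ := min (Int.fract x) (1 - Int.fract x)

/-- The representative of `x` modulo 1 lying in `(0, 1]`. -/
noncomputable def fract' (x : ℝ) : ℝ := 1 - Int.fract (-x)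

/-- The Sturmian word of slope `α` and intercept `ρ` in the lower convention:
`s n = 1` iff the fractional part of `ρ + nα` lies in `[1 - α, 1)`. -/
noncomputable def lowerWord (α ρ : ℝ) (n : ℕ) : Bool :=
  if 1 - α ≤ Int.fract (ρ + (n : ℝ) * α) then true else false

/-- The Sturmian word of slope `α` and intercept `ρ` in the upper convention:
`s n = 1` iff the representative of `ρ + nα` modulo 1 in `(0,1]` lies in `(1 - α, 1]`. -/
noncomputable def upperWord (α ρ : ℝ) (n : ℕ) : Bool :=
  if 1 - α < fract' (ρ + (n : ℝ) * α) then true else false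

/-- `s` is a Sturmian word of slope `α` (either convention, some intercept `ρ ∈ [0,1)`). -/
def IsSturmian (α : ℝ) (s : ℕ → Bool) : Prop :=
  ∃ ρ : ℝ, 0 ≤ ρ ∧ ρ < 1 ∧ (s = lowerWord α ρ ∨ s = upperWord α ρ)

/-- `w` is a (finite, contiguous) factor of the infinite word `s`. -/
def FactorOf (s : ℕ → Bool) (w : List Bool) : Prop :=
  ∃ i : ℕ, w = (List.range w.length).map fun j => s (i + j)

/-- `w` is a factor of slope `α`. -/
def IsFactor (α : ℝ) (w : List Bool) : Prop :=
  ∃ s : ℕ → Bool, IsSturmian α s ∧ FactorOf s w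

/-- Abelian equivalence: same length and the same number of occurrences of the letter 1. -/
def AbEq (u v : List Bool) : Prop :=
  u.length = v.length ∧ u.count true = v.count true

/-- `u` is an abelian power of period `m` and exponent `e`: a concatenation of `e ≥ 2` pairwise
abelian equivalent blocks, each of length `m ≥ 1`. -/
def IsAbelianPower (m e : ℕ) (u : List Bool) : Prop :=
  1 ≤ m ∧ 2 ≤ e ∧ u.length = e * m ∧
  ∀ i < e, ∀ j < e, AbEq ((u.drop (i * m)).take m) ((u.drop (j * m)).take m)

/-- `w` has abelian period `m`: `w` is a contiguous factor of some abelian power of period `m`. -/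
def HasAbPeriod (w : List Bool) (m : ℕ) : Prop :=
  ∃ e u, IsAbelianPower m e u ∧ w <:+: u

/-- `m` is the minimum abelian period of `w`. -/
def MinAbPeriod (w : List Bool) (m : ℕ) : Prop :=
  IsLeast {p : ℕ | HasAbPeriod w p} m

/-- `M(α) = {t·q_k : k ≥ 0, 1 ≤ t ≤ a_{k+1}}`. -/
def Mset (α : ℝ) : Set ℕ :=
  {m | ∃ k t : ℕ, 1 ≤ t ∧ t ≤ pq α (k + 1) ∧ m = t * qd α k}

/-- The set of denominators of convergents and semiconvergents of `α`. -/
def Qsc (α : ℝ) : Set ℕ :=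
  {m | (∃ k : ℕ, m = qd α k) ∨
    ∃ k l : ℕ, 1 ≤ k ∧ 1 ≤ l ∧ l < pq α (k + 1) ∧ m = l * qd α k + qd α (k - 1)}

/-- The singular factor of length `q_k`: the unique factor of slope `α` of length `q_k` that is not
abelian equivalent to any other factor of slope `α` of the same length. -/
def IsSingular (α : ℝ) (k : ℕ) (s : List Bool) : Prop :=
  IsFactor α s ∧ s.length = qd α k ∧
  ∀ u : List Bool, IsFactor α u → u.length = qd α k → u ≠ s → ¬ AbEq u s

/-- `v` occurs in `u` at position `i`. -/
def OccursAt (v u : List Bool) (i : ℕ) : Prop :=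
  i + v.length ≤ u.length ∧ (u.drop i).take v.length = v

/-- `u` is a complete first return to `v`: `v` is a prefix and a suffix of `u` and `v` has exactly
two occurrences in `u`. -/
def CompleteFirstReturn (v u : List Bool) : Prop :=
  v <+: u ∧ v <:+ u ∧ {i | OccursAt v u i}.ncard = 2

/-- `u` is a complete first return to `v` in the same phase. -/
def CFRSamePhase (v u : List Bool) : Prop :=
  v <+: u ∧ v <:+ u ∧ u.length % v.length = 0 ∧
  2 ≤ {i | OccursAt v u i}.ncard ∧
  ∀ i : ℕ, OccursAt v u i → i % v.length = 0 → i = 0 ∨ i = u.length - v.length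

lemma nint_eq_abs_sub_round (x : ℝ) : nint x = |x - round x| :=
  (abs_sub_round_eq_min x).symm

lemma nint_le_abs_sub (x : ℝ) (n : ℤ) : nint x ≤ |x - n| :=
  nint_eq_abs_sub_round x ▸ round_le x n

lemma le_nint_of_forall_le_abs_sub {x c : ℝ} (h : ∀ n : ℤ, c ≤ |x - n|) : c ≤ nint x :=
  nint_eq_abs_sub_round x ▸ h (round x)

lemma opposite_signs_of_pos_of_lt {q₀ q₁ u v : ℤ} (hq₀ : 0 ≤ q₀) (hq₁ : 0 ≤ q₁)
    (hpos : 0 < u * q₁ + v * q₀) (hlt : u * q₁ + v * q₀ < q₁) :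
    (1 ≤ u ∧ v ≤ -1) ∨ (u ≤ 0 ∧ 1 ≤ v) := by
  rcases le_or_gt u 0 with hu | hu <;> rcases le_or_gt v 0 with hv | hv
  · nlinarith
  · exact .inr ⟨hu, hv⟩
  · refine .inl ⟨hu, ?_⟩
    by_contra! hv'
    nlinarith
  · nlinarith

lemma le_abs_of_opposite_signs {A η₀ η₁ η₂ : ℝ} {b u v : ℤ} (hη₁ : 0 ≤ η₁) (hη₂ : 0 ≤ η₂)
    (hAη : A * η₂ ≤ η₁) (hη₀ : η₀ = b * η₁ + η₂) (hb : 1 ≤ b)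
    (huv : (1 ≤ u ∧ v ≤ -1) ∨ (u ≤ 0 ∧ 1 ≤ v)) (hexc : ¬(u = 1 ∧ v = -1 ∧ b = 1)) :
    η₁ + (A + 1) * η₂ ≤ |A * η₂ - u * η₁ + v * η₀| := by
  have hbR : (1 : ℝ) ≤ b := by exact_mod_cast hb
  rcases huv with ⟨hu, hv⟩ | ⟨hu, hv⟩
  · have hbig : 3 ≤ u - v * b := by
      by_contra! h
      exact hexc ⟨by nlinarith, by nlinarith, by nlinarith⟩
    have hbigR : (3 : ℝ) ≤ u - v * b := by exact_mod_cast hbig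
    have hvR : (v : ℝ) ≤ -1 := by exact_mod_cast hv
    rw [abs_of_nonpos (by nlinarith)]
    nlinarith
  · have huR : (u : ℝ) ≤ 0 := by exact_mod_cast hu
    have hvR : (1 : ℝ) ≤ v := by exact_mod_cast hv
    have hη₀' : η₁ + η₂ ≤ η₀ := by nlinarith
    have : η₁ + (A + 1) * η₂ ≤ A * η₂ - u * η₁ + v * η₀ := by
      nlinarith [mul_nonneg (neg_nonneg.mpr huR) hη₁,
        mul_nonneg (sub_nonneg.mpr hvR) (by linarith : 0 ≤ η₀)]
    exact this.trans (le_abs_self _)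

section ContinuedFraction

variable {α : ℝ}

lemma cq_succ (α : ℝ) (t : ℕ) : cq α (t + 1) = (Int.fract (cq α t))⁻¹ := rfl

lemma natCast_pq_succ (α : ℝ) (t : ℕ) : (pq α (t + 1) : ℝ) = ⌊cq α (t + 1)⌋ := by
  have : 0 ≤ ⌊cq α (t + 1)⌋ := Int.floor_nonneg.mpr (inv_nonneg.mpr (Int.fract_nonneg _))
  rw [pq, ← Int.toNat_of_nonneg this]
  rfl

lemma fract_cq_succ (α : ℝ) (t : ℕ) :
    Int.fract (cq α (t + 1)) = cq α (t + 1) - pq α (t + 1) := by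
  rw [natCast_pq_succ]; rfl

lemma irrational_cq (hirr : Irrational α) : ∀ t, Irrational (cq α t)
  | 0 => hirr
  | t + 1 => ((irrational_cq hirr t).sub_intCast _).inv

lemma fract_cq_pos (hirr : Irrational α) (t : ℕ) : 0 < Int.fract (cq α t) :=
  (Int.fract_nonneg _).lt_of_ne fun h => (irrational_cq hirr t).ne_int ⌊cq α t⌋ <| by
    rw [Int.fract] at h; linarith

lemma one_le_pq_succ (hirr : Irrational α) (t : ℕ) : 1 ≤ pq α (t + 1) := by
  have hcq : 1 ≤ cq α (t + 1) :=
    (one_le_inv₀ (fract_cq_pos hirr t)).mpr (Int.fract_lt_one _).le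
  have : (1 : ℝ) ≤ pq α (t + 1) := by
    rw [natCast_pq_succ]; exact_mod_cast Int.le_floor.mpr (by exact_mod_cast hcq)
  exact_mod_cast this

/-- `pn α k = p_k`, the numerator of the `k`-th convergent. -/
def pn (α : ℝ) : ℕ → ℕ
  | 0 => 0
  | 1 => 1
  | k + 2 => pq α (k + 2) * pn α (k + 1) + pn α k

lemma pn_mul_qd_sub_pn_mul_qd (α : ℝ) :
    ∀ j, (pn α (j + 1) * qd α j - pn α j * qd α (j + 1) : ℤ) = (-1) ^ j
  | 0 => by simp [pn, qd]
  | j + 1 => by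
    have ih := pn_mul_qd_sub_pn_mul_qd α j
    simp only [pn, qd, Nat.cast_add, Nat.cast_mul, pow_succ]
    linear_combination -ih

lemma exists_eq_qd_pn_combination (α : ℝ) (j : ℕ) (r N : ℤ) :
    ∃ u v : ℤ, r = u * qd α (j + 1) + v * qd α j ∧ N = u * pn α (j + 1) + v * pn α j := by
  obtain ⟨ε, hε⟩ : ∃ ε : ℤ, (-1) ^ j = ε := ⟨_, rfl⟩
  have hdet := pn_mul_qd_sub_pn_mul_qd α j
  have hεε : ε * ε = 1 := by rw [← hε, ← mul_pow]; norm_num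
  rw [hε] at hdet
  refine ⟨ε * (N * qd α j - r * pn α j), ε * (r * pn α (j + 1) - N * qd α (j + 1)), ?_, ?_⟩
  · linear_combination (-(ε * r)) * hdet - r * hεε
  · linear_combination (-(ε * N)) * hdet - N * hεε

/-- `eta α j = |q_j α - p_j|`: the sign of `q_j α - p_j` is `(-1) ^ j` (see `eta_nonneg`). -/
def eta (α : ℝ) (j : ℕ) : ℝ := (-1) ^ j * ((qd α j : ℝ) * α - pn α j)

lemma qd_mul_sub_pn (α : ℝ) (j : ℕ) : (qd α j : ℝ) * α - pn α j = (-1) ^ j * eta α j := by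
  rw [eta, ← mul_assoc, ← mul_pow]; norm_num

lemma eta_add_two (α : ℝ) (j : ℕ) :
    eta α (j + 2) = eta α j - pq α (j + 2) * eta α (j + 1) := by
  simp only [eta, qd, pn, Nat.cast_add, Nat.cast_mul, pow_succ]
  ring

lemma eta_succ (hirr : Irrational α) (h0 : 0 < α) (h1 : α < 1) :
    ∀ j, eta α (j + 1) = eta α j * Int.fract (cq α (j + 1))
  | 0 => by
    have hα : cq α 1 = α⁻¹ := by rw [cq_succ, cq, Int.fract_eq_self.mpr ⟨h0.le, h1⟩]
    rw [fract_cq_succ, hα]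
    simp only [eta, qd, pn]
    field_simp
    ring
  | j + 1 => by
    have ih := eta_succ hirr h0 h1 j
    have hne := (fract_cq_pos hirr (j + 1)).ne'
    rw [eta_add_two, ih, fract_cq_succ α (j + 1), cq_succ α (j + 1)]
    field_simp

lemma eta_nonneg (hirr : Irrational α) (h0 : 0 < α) (h1 : α < 1) : ∀ j, 0 ≤ eta α j
  | 0 => by simpa [eta, qd, pn] using h0.le
  | j + 1 => eta_succ hirr h0 h1 j ▸ mul_nonneg (eta_nonneg hirr h0 h1 j) (Int.fract_nonneg _)

lemma nint_qd_mul_le_eta (hirr : Irrational α) (h0 : 0 < α) (h1 : α < 1) (j : ℕ) :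
    nint (qd α j * α) ≤ eta α j := by
  have := nint_le_abs_sub (qd α j * α) (pn α j)
  rwa [Int.cast_natCast, qd_mul_sub_pn, abs_mul, abs_pow, abs_neg, abs_one, one_pow, one_mul,
    abs_of_nonneg (eta_nonneg hirr h0 h1 j)] at this

lemma abs_sub_eq_abs_eta_combination (α : ℝ) (j : ℕ) (a u v : ℤ) :
    |((a * qd α (j + 2) + u * qd α (j + 1) + v * qd α j : ℤ) : ℝ) * α
        - ((a * pn α (j + 2) + u * pn α (j + 1) + v * pn α j : ℤ) : ℝ)|
      = |a * eta α (j + 2) - u * eta α (j + 1) + v * eta α j| := by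
  have h₀ := qd_mul_sub_pn α j
  have h₁ := qd_mul_sub_pn α (j + 1)
  have h₂ := qd_mul_sub_pn α (j + 2)
  rw [pow_succ] at h₁
  rw [pow_succ, pow_succ] at h₂
  have : ((a * qd α (j + 2) + u * qd α (j + 1) + v * qd α j : ℤ) : ℝ) * α
        - ((a * pn α (j + 2) + u * pn α (j + 1) + v * pn α j : ℤ) : ℝ)
      = (-1) ^ j * (a * eta α (j + 2) - u * eta α (j + 1) + v * eta α j) := by
    push_cast
    linear_combination (a : ℝ) * h₂ + (u : ℝ) * h₁ + (v : ℝ) * h₀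
  rw [this, abs_mul, abs_pow, abs_neg, abs_one, one_pow, one_mul]

lemma eta_add_le_nint (hirr : Irrational α) (h0 : 0 < α) (h1 : α < 1) {n m : ℕ}
    (hlo : pq α (n + 3) * qd α (n + 2) < m) (hhi : m < qd α (n + 3))
    (hne : pq α (n + 2) = 1 → m ≠ (pq α (n + 3) - 1) * qd α (n + 2) + 2 * qd α (n + 1)) :
    eta α (n + 1) + (pq α (n + 3) + 1) * eta α (n + 2) ≤ nint (m * α) := by
  refine le_nint_of_forall_le_abs_sub fun N => ?_
  set A := pq α (n + 3)
  have hqd : qd α (n + 3) = A * qd α (n + 2) + qd α (n + 1) := rfl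
  obtain ⟨u, v, hr, hN⟩ :=
    exists_eq_qd_pn_combination α n (m - A * qd α (n + 2)) (N - A * pn α (n + 2))
  have hm : ((A * qd α (n + 2) + u * qd α (n + 1) + v * qd α n : ℤ) : ℝ) = m := by
    exact_mod_cast (by linarith : A * qd α (n + 2) + u * qd α (n + 1) + v * qd α n = (m : ℤ))
  have habs := abs_sub_eq_abs_eta_combination α n A u v
  rw [hm, show A * pn α (n + 2) + u * pn α (n + 1) + v * pn α n = N by linarith,
    Int.cast_natCast] at habs
  rw [habs]
  refine le_abs_of_opposite_signs (b := pq α (n + 2)) (eta_nonneg hirr h0 h1 _)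
    (eta_nonneg hirr h0 h1 _) ?_ ?_ (by exact_mod_cast one_le_pq_succ hirr (n + 1)) ?_ ?_
  · linarith [eta_add_two α (n + 1), eta_nonneg hirr h0 h1 (n + 3)]
  · rw [eta_add_two, Int.cast_natCast]; ring
  · have hlo' : (A * qd α (n + 2) : ℤ) < m := by exact_mod_cast hlo
    have hhi' : (m : ℤ) < A * qd α (n + 2) + qd α (n + 1) := by
      rw [hqd] at hhi; exact_mod_cast hhi
    exact opposite_signs_of_pos_of_lt (q₀ := qd α n) (q₁ := qd α (n + 1)) (Nat.cast_nonneg _)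
      (Nat.cast_nonneg _) (by linarith) (by linarith)
  · rintro ⟨rfl, rfl, hbZ⟩
    have hb : pq α (n + 2) = 1 := by exact_mod_cast hbZ
    have hqd' : qd α (n + 2) = qd α (n + 1) + qd α n := by simp [qd, hb]
    have hA : 1 ≤ A := one_le_pq_succ hirr (n + 2)
    refine hne hb ?_
    zify [hA]
    linarith

end ContinuedFraction

theorem larger_lower_bound_general
    (α : ℝ) (hirr : Irrational α) (h0 : 0 < α) (h1 : α < 1)
    (k : ℕ) (m : ℕ)
    (hlo : pq α (k + 1) * qd α k < m) (hhi : m < qd α (k + 1))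
    (hne2 : pq α k = 1 → m ≠ (pq α (k + 1) - 1) * qd α k + 2 * qd α (k - 1)) :
    nint ((qd α (k - 1) : ℝ) * α) + ((pq α (k + 1) : ℝ) + 1) * nint ((qd α k : ℝ) * α)
      ≤ nint ((m : ℝ) * α) := by
  obtain _ | _ | n := k
  · simp only [zero_add, qd, mul_one] at hlo hhi; omega
  · simp only [zero_add, Nat.reduceAdd, qd, Order.lt_add_one_iff] at hlo hhi; omega
  calc _ ≤ eta α (n + 1) + (pq α (n + 3) + 1) * eta α (n + 2) := by
        gcongr <;> exact nint_qd_mul_le_eta hirr h0 h1 _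
    _ ≤ nint (m * α) := eta_add_le_nint hirr h0 h1 hlo hhi hne2

theorem larger_lower_bound
    (α : ℝ) (hirr : Irrational α) (h0 : 0 < α) (h1 : α < 1)
    (k : ℕ) (hk : 1 ≤ k) (m : ℕ)
    (hlo : pq α (k + 1) * qd α k < m) (hhi : m < qd α (k + 1))
    (hne1 : m ≠ (pq α (k + 1) - 1) * qd α k + qd α (k - 1))
    (hne2 : pq α k = 1 → m ≠ (pq α (k + 1) - 1) * qd α k + 2 * qd α (k - 1)) :
    nint ((qd α (k - 1) : ℝ) * α) + ((pq α (k + 1) : ℝ) + 1) * nint ((qd α k : ℝ) * α)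
      ≤ nint ((m : ℝ) * α) :=
  larger_lower_bound_general α hirr h0 h1 k m hlo hhi hne2

end SturmianAbelian
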